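/- arXiv:1311.4630 — 4 statements merged into one kernel-verified Lean document; each statement's English description precedes it below -/
import Mathlib

section
/- There exists a constant C > 0 such that for all real s ≥ 1, all μ ∈ ℝ, and all γ ∈ [−π, π]: | ∑_{n∈ℤ} (2πs²)^{−1/2} exp(−(n−μ)²/(2s²)) · e^{inγ} − e^{iμγ} · exp(−s²γ²/2) | ≤ C · exp(−π²s²/2). In particular one may take C = 3. -/
/-!
Poisson summation turns the characteristic sum of the discretized Gaussian into the periodization
`∑ₖ φ(γ - 2πk)` of the continuous characteristic function `φ(t) = e^{iμt} e^{-s²t²/2}`; here this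
is Jacobi's theta transformation `Complex.tsum_exp_neg_quadratic`. The `k = 0` term is `φ(γ)`,
and for `|k| = m + 1`, `|γ| ≤ π` gives `|γ - 2πk| ≥ (2m + 1)π`, so the term is at most
`e^{-π²s²/2} e^{-2m}` once `s ≥ 1`. Summing the two geometric tails gives
`2 e^{-π²s²/2} / (1 - e^{-2}) ≤ 3 e^{-π²s²/2}`.
-/

open Real Complex

noncomputable def discreteGaussian (μ s x : ℝ) : ℝ :=
  (2 * π * s ^ 2) ^ (-(1/2 : ℝ)) * rexp (-(x - μ) ^ 2 / (2 * s ^ 2))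

noncomputable def gaussianCharFun (μ s t : ℝ) : ℂ :=
  cexp (μ * t * I) * (rexp (-(s ^ 2 * t ^ 2) / 2) : ℂ)

theorem tsum_discreteGaussian_mul_cexp (μ γ : ℝ) {s : ℝ} (hs : s ≠ 0) :
    ∑' n : ℤ, (discreteGaussian μ s n : ℂ) * cexp (n * γ * I) =
      ∑' n : ℤ, gaussianCharFun μ s (γ - 2 * π * n) := by
  have hσ : 0 < 2 * π * s ^ 2 := by positivity
  have hsC : (s : ℂ) ≠ 0 := ofReal_ne_zero.2 hs
  have hπC : (π : ℂ) ≠ 0 := ofReal_ne_zero.2 pi_ne_zero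
  set a : ℂ := (((2 * π * s ^ 2)⁻¹ : ℝ) : ℂ)
  set b : ℂ := (μ / s ^ 2 + γ * I) / (2 * π)
  set c : ℂ := (((2 * π * s ^ 2) ^ (-(1/2 : ℝ)) : ℝ) : ℂ)
  have ha : 0 < a.re := by simp only [a, ofReal_re]; positivity
  have hc : a ^ (1 / 2 : ℂ) = c := by
    rw [show (1 / 2 : ℂ) = ((1 / 2 : ℝ) : ℂ) by norm_num, ← ofReal_cpow (by positivity),
      Real.inv_rpow hσ.le, ← Real.rpow_neg hσ.le]
  -- Each term is `c` times `exp(-πan² + 2πbn)`, and `c` cancels the factor `1 / a^{1/2}`.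
  have hlhs (n : ℤ) : (discreteGaussian μ s n : ℂ) * cexp (n * γ * I) =
      c * (cexp (-μ ^ 2 / (2 * s ^ 2)) * cexp (-π * a * n ^ 2 + 2 * π * b * n)) := by
    rw [discreteGaussian, ofReal_mul, ofReal_exp, mul_assoc, ← Complex.exp_add, ← Complex.exp_add]
    congr 2
    simp only [a, b]
    push_cast
    field_simp
    ring
  have hrhs (n : ℤ) : cexp (-μ ^ 2 / (2 * s ^ 2)) * cexp (-π / a * (n + I * b) ^ 2) =
      gaussianCharFun μ s (γ - 2 * π * n) := by
    rw [gaussianCharFun, ofReal_exp, ← Complex.exp_add, ← Complex.exp_add]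
    congr 1
    simp only [a, b]
    push_cast
    field_simp
    ring_nf
    simp only [I_sq, I_pow_three, I_pow_four]
    ring
  have hc0 : c ≠ 0 := by simp only [c, ne_eq, ofReal_eq_zero]; positivity
  simp_rw [hlhs, tsum_mul_left, Complex.tsum_exp_neg_quadratic ha b, hc, ← hrhs, tsum_mul_left]
  field_simp

theorem norm_gaussianCharFun (μ s t : ℝ) :
    ‖gaussianCharFun μ s t‖ = rexp (-(s ^ 2 * t ^ 2) / 2) := by
  rw [gaussianCharFun, norm_mul, ← ofReal_mul, norm_exp_ofReal_mul_I, one_mul, norm_real,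
    Real.norm_of_nonneg (exp_nonneg _)]

theorem norm_gaussianCharFun_sub_two_pi_mul_le {s γ x : ℝ} (μ : ℝ) (m : ℕ) (hs : 1 ≤ s)
    (hγ : |γ| ≤ π) (hx : m + 1 ≤ |x|) :
    ‖gaussianCharFun μ s (γ - 2 * π * x)‖ ≤ rexp (-(π ^ 2 * s ^ 2) / 2) * rexp (-2) ^ m := by
  have hdist : π * (2 * m + 1) ≤ |γ - 2 * π * x| := by
    have := abs_sub_abs_le_abs_sub (2 * π * x) γ
    rw [abs_sub_comm, abs_mul, abs_of_pos two_pi_pos] at this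
    nlinarith [pi_pos]
  have hπs : 1 ≤ π ^ 2 * s ^ 2 := by
    rw [← mul_pow]
    exact one_le_pow₀ (one_le_mul_of_one_le_of_one_le (by linarith [pi_gt_three]) hs)
  have hexponent : π ^ 2 * s ^ 2 + 4 * m ≤ s ^ 2 * (γ - 2 * π * x) ^ 2 := by
    have hsq : (π * (2 * m + 1)) ^ 2 ≤ (γ - 2 * π * x) ^ 2 := by
      rw [← sq_abs (γ - 2 * π * x)]
      exact pow_le_pow_left₀ (by positivity) hdist 2
    have hm : (0 : ℝ) ≤ m := m.cast_nonneg
    calc π ^ 2 * s ^ 2 + 4 * m ≤ π ^ 2 * s ^ 2 + 4 * m * ((m + 1) * (π ^ 2 * s ^ 2)) := by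
          nlinarith [mul_nonneg hm (mul_nonneg hm (by positivity : (0 : ℝ) ≤ π ^ 2 * s ^ 2))]
      _ = s ^ 2 * (π * (2 * m + 1)) ^ 2 := by ring
      _ ≤ s ^ 2 * (γ - 2 * π * x) ^ 2 := by gcongr
  rw [norm_gaussianCharFun, ← Real.exp_nat_mul, ← Real.exp_add]
  gcongr
  linarith

theorem norm_tsum_gaussianCharFun_sub_le {s γ : ℝ} (μ : ℝ) (hs : 1 ≤ s) (hγ : |γ| ≤ π) :
    ‖∑' k : ℤ, gaussianCharFun μ s (γ - 2 * π * k) - gaussianCharFun μ s γ‖ ≤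
      3 * rexp (-(π ^ 2 * s ^ 2) / 2) := by
  have hr : rexp (-2) ≤ 1 / 3 := by
    rw [Real.exp_neg, one_div]
    exact inv_anti₀ (by norm_num) (by linarith [add_one_le_exp (2 : ℝ)])
  set e := rexp (-(π ^ 2 * s ^ 2) / 2)
  set r := rexp (-2)
  have hgeom : HasSum (fun m : ℕ ↦ e * r ^ m) (e * (1 - r)⁻¹) :=
    (hasSum_geometric_of_lt_one (exp_nonneg _) (by linarith)).mul_left e
  have hpos (m : ℕ) : ‖gaussianCharFun μ s (γ - 2 * π * ((m + 1 : ℤ) : ℝ))‖ ≤ e * r ^ m :=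
    norm_gaussianCharFun_sub_two_pi_mul_le μ m hs hγ <| by
      push_cast; rw [abs_of_nonneg (by positivity)]
  have hneg (m : ℕ) : ‖gaussianCharFun μ s (γ - 2 * π * ((-(m + 1) : ℤ) : ℝ))‖ ≤ e * r ^ m :=
    norm_gaussianCharFun_sub_two_pi_mul_le μ m hs hγ <| by
      push_cast; rw [abs_neg, abs_of_nonneg (by positivity)]
  rw [tsum_of_add_one_of_neg_add_one (hgeom.summable.of_norm_bounded hpos)
    (hgeom.summable.of_norm_bounded hneg), Int.cast_zero, mul_zero, sub_zero, add_right_comm,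
    add_sub_cancel_right]
  calc _ ≤ e * (1 - r)⁻¹ + e * (1 - r)⁻¹ :=
        (norm_add_le _ _).trans (add_le_add (tsum_of_norm_bounded hgeom hpos)
          (tsum_of_norm_bounded hgeom hneg))
    _ ≤ 3 * e := by
        have : (1 - r)⁻¹ ≤ 3 / 2 := by
          rw [inv_le_comm₀ (by linarith) (by norm_num)]; linarith
        nlinarith [exp_nonneg (-(π ^ 2 * s ^ 2) / 2)]

theorem stmt_3 :
    ∃ C : ℝ, 0 < C ∧ C = 3 ∧
      ∀ (s μ γ : ℝ), 1 ≤ s → γ ∈ Set.Icc (-Real.pi) Real.pi →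
        ‖(∑' n : ℤ, (((2 * Real.pi * s ^ 2) ^ (-(1/2 : ℝ)) *
              Real.exp (-((n : ℝ) - μ) ^ 2 / (2 * s ^ 2)) : ℝ) : ℂ) *
              Complex.exp ((n : ℂ) * (γ : ℂ) * Complex.I)) -
            Complex.exp ((μ : ℂ) * (γ : ℂ) * Complex.I) *
              (Real.exp (-(s ^ 2 * γ ^ 2) / 2) : ℂ)‖
          ≤ C * Real.exp (-(Real.pi ^ 2 * s ^ 2) / 2) := by
  refine ⟨3, three_pos, rfl, fun s μ γ hs hγ ↦ ?_⟩
  calc _ = ‖∑' k : ℤ, gaussianCharFun μ s (γ - 2 * π * k) - gaussianCharFun μ s γ‖ := by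
        rw [← tsum_discreteGaussian_mul_cexp μ γ (one_pos.trans_le hs).ne']
        rfl
    _ ≤ _ := norm_tsum_gaussianCharFun_sub_le μ hs (abs_le.2 hγ)
end

section
/- Fix a prime d ≥ 2 and let ω = exp(2πi/d). Let p : ZMod d → ℝ be a probability distribution (p k ≥ 0 for all k, ∑_k p k = 1) with at least two nonzero components, and define the N-fold convolution powers c⁽ᴺ⁾ : ZMod d → ℝ by c⁽¹⁾ = p and c⁽ᴺ⁺¹⁾ j = ∑_{k} c⁽ᴺ⁾(j − k) · p k. Then there exists ε ∈ [0, 1) such that for all N ≥ 1: (1/d) · | ∑_{j ∈ ZMod d} √(c⁽ᴺ⁾ j) |² ≥ 1 − (d−1)³ · ε^{2N}. That is, the probability that the covariant measurement on N copies correctly identifies the ℤ_d misalignment converges to 1 exponentially fast in N. -/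
/-!
The discrete Fourier transform turns convolution powers into pointwise powers:
`𝓕 c⁽ᴺ⁾ m = (𝓕 p m) ^ N`. For `m ≠ 0` the characters `k ↦ ω^(-k m)` separate the two support
points of `p` (as `d` is prime), so strict convexity of `ℂ` gives `‖𝓕 p m‖ ≤ ε < 1`. Fourier
inversion then puts `c⁽ᴺ⁾` within `(d - 1) εᴺ` of the uniform distribution in `ℓ¹`, and the
Bhattacharyya bound `(∑ √(q r))² ≥ 1 - ‖q - r‖₁` against the uniform distribution finishes.
-/

open Finset ZMod

namespace ZMod

variable {n : ℕ} [NeZero n]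

lemma norm_stdAddChar (j : ZMod n) : ‖stdAddChar j‖ = 1 :=
  Circle.norm_coe _

lemma dft_convolution (f g : ZMod n → ℂ) (m : ZMod n) :
    𝓕 (fun j ↦ ∑ k, f (j - k) * g k) m = 𝓕 f m * 𝓕 g m := by
  rw [dft_apply, dft_apply, dft_apply, Finset.sum_mul_sum, Finset.sum_comm]
  simp only [smul_eq_mul, Finset.mul_sum]
  rw [Finset.sum_comm]
  refine Finset.sum_congr rfl fun k _ ↦ ?_
  rw [← Equiv.sum_comp (Equiv.addRight k)]
  refine Finset.sum_congr rfl fun i _ ↦ ?_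
  rw [Equiv.coe_addRight, add_sub_cancel_right,
    show -((i + k) * m) = -(i * m) + -(k * m) by ring, AddChar.map_add_eq_mul]
  ring

lemma norm_dft_lt_one (hn : n.Prime) {p : ZMod n → ℝ} (hp : ∀ k, 0 ≤ p k)
    (hpsum : ∑ k, p k = 1) {j k : ZMod n} (hjk : j ≠ k) (hj : p j ≠ 0) (hk : p k ≠ 0)
    {m : ZMod n} (hm : m ≠ 0) : ‖𝓕 (fun i ↦ (p i : ℂ)) m‖ < 1 := by
  have : Fact n.Prime := ⟨hn⟩
  have hdft : 𝓕 (fun i ↦ (p i : ℂ)) m = ∑ i, p i • stdAddChar (-(i * m)) := by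
    simp only [dft_apply, smul_eq_mul, Complex.real_smul, mul_comm]
  rw [hdft]
  refine norm_sum_lt_of_strictConvexSpace (fun i _ ↦ hp i) hpsum (mem_univ j) (mem_univ k) ?_
    hj hk fun i _ ↦ (norm_stdAddChar _).le
  exact injective_stdAddChar.ne (neg_injective.ne (mul_left_injective₀ hm |>.ne hjk))

lemma abs_sub_inv_le_of_norm_dft_le {q : ZMod n → ℝ} (hq : ∑ j, q j = 1) {δ : ℝ}
    (hδ : ∀ m ≠ 0, ‖𝓕 (fun j ↦ (q j : ℂ)) m‖ ≤ δ) (j : ZMod n) :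
    |q j - (n : ℝ)⁻¹| ≤ (n : ℝ)⁻¹ * ((n - 1) * δ) := by
  set Q := 𝓕 (fun j ↦ (q j : ℂ)) with hQ
  have hQ0 : Q 0 = 1 := by
    rw [hQ, dft_apply_zero]; exact_mod_cast hq
  have hinv : (q j : ℂ) = (n : ℂ)⁻¹ * (1 + ∑ m ∈ univ.erase 0, stdAddChar (m * j) * Q m) := by
    have := invDFT_apply Q j
    rw [LinearEquiv.symm_apply_apply] at this
    rw [this, ← Finset.add_sum_erase _ _ (mem_univ 0)]
    simp [hQ0]
  have hdev : ((q j - (n : ℝ)⁻¹ : ℝ) : ℂ) =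
      (n : ℂ)⁻¹ * ∑ m ∈ univ.erase 0, stdAddChar (m * j) * Q m := by
    push_cast; rw [hinv]; ring
  rw [← Real.norm_eq_abs, ← Complex.norm_real, hdev, norm_mul, norm_inv, Complex.norm_natCast]
  gcongr
  calc ‖∑ m ∈ univ.erase 0, stdAddChar (m * j) * Q m‖ ≤ ∑ m ∈ univ.erase (0 : ZMod n), δ :=
        norm_sum_le_of_le _ fun m hm ↦ by
          rw [norm_mul, norm_stdAddChar, one_mul]; exact hδ m (ne_of_mem_erase hm)
    _ = (n - 1) * δ := by
      rw [sum_const, card_erase_of_mem (mem_univ _), card_univ, ZMod.card, nsmul_eq_mul,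
        Nat.cast_sub NeZero.one_le, Nat.cast_one]

lemma sum_abs_sub_inv_le_of_norm_dft_le {q : ZMod n → ℝ} (hq : ∑ j, q j = 1) {δ : ℝ}
    (hδ : ∀ m ≠ 0, ‖𝓕 (fun j ↦ (q j : ℂ)) m‖ ≤ δ) :
    ∑ j, |q j - (n : ℝ)⁻¹| ≤ (n - 1) * δ :=
  calc ∑ j, |q j - (n : ℝ)⁻¹| ≤ ∑ _j : ZMod n, (n : ℝ)⁻¹ * ((n - 1) * δ) :=
        sum_le_sum fun j _ ↦ abs_sub_inv_le_of_norm_dft_le hq hδ j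
    _ = (n - 1) * δ := by
      rw [sum_const, card_univ, ZMod.card, nsmul_eq_mul,
        mul_inv_cancel_left₀ (Nat.cast_ne_zero.2 (NeZero.ne n))]

def IsConvPowers (p : ZMod n → ℝ) (c : ℕ → ZMod n → ℝ) : Prop :=
  c 1 = p ∧ ∀ N, 1 ≤ N → ∀ j, c (N + 1) j = ∑ k, c N (j - k) * p k

lemma IsConvPowers.dft_eq_pow {p : ZMod n → ℝ} {c : ℕ → ZMod n → ℝ} (hc : IsConvPowers p c)
    {N : ℕ} (hN : 1 ≤ N) (m : ZMod n) :
    𝓕 (fun j ↦ (c N j : ℂ)) m = 𝓕 (fun j ↦ (p j : ℂ)) m ^ N := by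
  induction N, hN using Nat.le_induction generalizing m with
  | base => rw [hc.1, pow_one]
  | succ N hN ih =>
    have hcN : (fun j ↦ (c (N + 1) j : ℂ)) = fun j ↦ ∑ k, (c N (j - k) : ℂ) * (p k : ℂ) := by
      ext j; rw [hc.2 N hN j]; push_cast; rfl
    rw [hcN, dft_convolution (fun j ↦ (c N j : ℂ)), ih, pow_succ]

lemma IsConvPowers.sum_eq_pow {p : ZMod n → ℝ} {c : ℕ → ZMod n → ℝ} (hc : IsConvPowers p c)
    {N : ℕ} (hN : 1 ≤ N) : ∑ j, c N j = (∑ j, p j) ^ N := by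
  have := hc.dft_eq_pow hN 0
  rw [dft_apply_zero, dft_apply_zero] at this
  exact_mod_cast this

lemma IsConvPowers.nonneg {p : ZMod n → ℝ} {c : ℕ → ZMod n → ℝ} (hc : IsConvPowers p c)
    (hp : ∀ k, 0 ≤ p k) {N : ℕ} (hN : 1 ≤ N) (j : ZMod n) : 0 ≤ c N j := by
  induction N, hN using Nat.le_induction generalizing j with
  | base => rw [hc.1]; exact hp j
  | succ N hN ih =>
    rw [hc.2 N hN j]
    exact sum_nonneg fun k _ ↦ mul_nonneg (ih _) (hp k)

end ZMod

lemma one_sub_half_sum_abs_sub_le_sum_sqrt_mul {ι : Type*} [Fintype ι] {q r : ι → ℝ}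
    (hq : ∀ i, 0 ≤ q i) (hr : ∀ i, 0 ≤ r i) (hqsum : ∑ i, q i = 1) (hrsum : ∑ i, r i = 1) :
    1 - (∑ i, |q i - r i|) / 2 ≤ ∑ i, √(q i) * √(r i) := by
  have hmin : ∀ i, min (q i) (r i) ≤ √(q i) * √(r i) := fun i ↦ by
    rw [← Real.sqrt_mul (hq i), Real.le_sqrt (le_min (hq i) (hr i)) (mul_nonneg (hq i) (hr i)), sq]
    exact mul_le_mul (min_le_left _ _) (min_le_right _ _) (le_min (hq i) (hr i)) (hq i)
  have hmin_eq : ∀ i, min (q i) (r i) = (q i + r i - |q i - r i|) / 2 := fun i ↦ by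
    linarith [min_add_max (q i) (r i), max_sub_min_eq_abs' (q i) (r i)]
  calc 1 - (∑ i, |q i - r i|) / 2 = ∑ i, min (q i) (r i) := by
        simp only [hmin_eq, ← sum_div, sum_sub_distrib, sum_add_distrib, hqsum, hrsum]; ring
    _ ≤ ∑ i, √(q i) * √(r i) := sum_le_sum fun i _ ↦ hmin i

lemma one_sub_sum_abs_sub_le_sq_sum_sqrt_mul {ι : Type*} [Fintype ι] {q r : ι → ℝ}
    (hq : ∀ i, 0 ≤ q i) (hr : ∀ i, 0 ≤ r i) (hqsum : ∑ i, q i = 1) (hrsum : ∑ i, r i = 1) :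
    1 - ∑ i, |q i - r i| ≤ (∑ i, √(q i) * √(r i)) ^ 2 := by
  have h := one_sub_half_sum_abs_sub_le_sum_sqrt_mul hq hr hqsum hrsum
  have hB : 0 ≤ ∑ i, √(q i) * √(r i) := sum_nonneg fun i _ ↦ by positivity
  rcases le_total (1 - (∑ i, |q i - r i|) / 2) 0 with h0 | h0
  · nlinarith
  · nlinarith [pow_le_pow_left₀ h0 h 2, sq_nonneg (∑ i, |q i - r i|)]

open scoped NNReal

theorem stmt_6 (d : ℕ) [NeZero d] (hd : d.Prime)
    (p : ZMod d → ℝ) (hp : ∀ k, 0 ≤ p k) (hpsum : ∑ k, p k = 1)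
    (htwo : ∃ j k : ZMod d, j ≠ k ∧ p j ≠ 0 ∧ p k ≠ 0)
    (c : ℕ → ZMod d → ℝ) (hc1 : c 1 = p)
    (hcrec : ∀ N : ℕ, 1 ≤ N → ∀ j : ZMod d, c (N + 1) j = ∑ k : ZMod d, c N (j - k) * p k) :
    ∃ ε : ℝ, 0 ≤ ε ∧ ε < 1 ∧ ∀ N : ℕ, 1 ≤ N →
      (1 / d) * |∑ j : ZMod d, Real.sqrt (c N j)| ^ 2
        ≥ 1 - ((d : ℝ) - 1) ^ 3 * ε ^ (2 * N) := by
  have hc : IsConvPowers p c := ⟨hc1, hcrec⟩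
  obtain ⟨j₀, k₀, hjk, hj₀, hk₀⟩ := htwo
  obtain ⟨ε, hε1, hεP⟩ : ∃ ε : ℝ≥0, ε < 1 ∧ ∀ m ≠ 0, ‖𝓕 (fun j ↦ (p j : ℂ)) m‖₊ ≤ ε :=
    ⟨(univ.erase 0).sup fun m ↦ ‖𝓕 (fun j ↦ (p j : ℂ)) m‖₊,
      (Finset.sup_lt_iff zero_lt_one).2 fun m hm ↦
        norm_dft_lt_one hd hp hpsum hjk hj₀ hk₀ (ne_of_mem_erase hm),
      fun m hm ↦ le_sup (f := fun m ↦ ‖𝓕 (fun j ↦ (p j : ℂ)) m‖₊) (mem_erase.2 ⟨hm, mem_univ m⟩)⟩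
  refine ⟨√ε, Real.sqrt_nonneg _, ?_, fun N hN ↦ ?_⟩
  · rw [Real.sqrt_lt' one_pos]; simpa using hε1
  have hcN := hc.nonneg hp hN
  have hcsum : ∑ j, c N j = 1 := by rw [hc.sum_eq_pow hN, hpsum, one_pow]
  have hdev : ∑ j, |c N j - (d : ℝ)⁻¹| ≤ (d - 1) * ε ^ N :=
    sum_abs_sub_inv_le_of_norm_dft_le hcsum fun m hm ↦ by
      rw [hc.dft_eq_pow hN, norm_pow]; gcongr; exact_mod_cast hεP m hm
  have hunif : ∑ _j : ZMod d, (d : ℝ)⁻¹ = 1 := by simp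
  have hbound := one_sub_sum_abs_sub_le_sq_sum_sqrt_mul hcN
    (fun _ ↦ inv_nonneg.2 d.cast_nonneg) hcsum hunif
  have hlhs : (1 / d) * |∑ j, √(c N j)| ^ 2 = (∑ j, √(c N j) * √((d : ℝ)⁻¹)) ^ 2 := by
    rw [← sum_mul, mul_pow, Real.sq_sqrt (by positivity), sq_abs]; ring
  have hd1 : (1 : ℝ) ≤ d - 1 := by
    have := hd.two_le; rw [le_sub_iff_add_le]; norm_cast
  rw [ge_iff_le, hlhs, pow_mul, Real.sq_sqrt ε.coe_nonneg]
  calc 1 - ((d : ℝ) - 1) ^ 3 * ε ^ N ≤ 1 - (d - 1) * ε ^ N := by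
        gcongr; exact le_self_pow₀ hd1 (by norm_num)
    _ ≤ 1 - ∑ j, |c N j - (d : ℝ)⁻¹| := by linarith
    _ ≤ _ := hbound
end

section
/- Fix an integer d ≥ 2 and let ω = exp(2πi/d). Let c : ZMod d → ℝ satisfy c_j ≥ 0 for all j, ∑_j c_j = 1, and |c_j − 1/d| ≤ δ for all j, for some δ ≥ 0. Then for every a ≠ 0 in ZMod d: (1/d) · | ∑_{j ∈ ZMod d} ω^{a·j} · √(c_j) |² ≤ d² · δ². -/
/-!
The sum `∑ⱼ ω^{aj}` vanishes for `a ≠ 0`, so `√(1/d)` may be subtracted from every `√cⱼ`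
without changing `∑ⱼ ω^{aj} √cⱼ`. Since `(√x - √y)(√x + √y) = x - y`, each
`|√cⱼ - √(1/d)|` is at most `δ / √(1/d) = δ √d`, and the triangle inequality bounds the
sum by `d · δ √d`.
-/

open Finset

theorem IsPrimitiveRoot.sum_pow_val_mul_eq_zero {K : Type*} [CommRing K] [IsDomain K]
    {n : ℕ} [NeZero n] {ζ : K} (hζ : IsPrimitiveRoot ζ n) {a : ZMod n} (ha : a ≠ 0) :
    ∑ j : ZMod n, ζ ^ (a * j).val = 0 :=
  AddChar.sum_eq_zero_of_ne_one (AddChar.zmodChar_primitive_of_primitive_root n hζ ha)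

theorem norm_sum_mul_le_sum_norm_sub_of_sum_eq_zero {ι 𝕜 : Type*} [NormedField 𝕜]
    {s : Finset ι} {w : ι → 𝕜} (hw : ∑ i ∈ s, w i = 0) (hw₁ : ∀ i ∈ s, ‖w i‖ ≤ 1)
    (x : ι → 𝕜) (t : 𝕜) :
    ‖∑ i ∈ s, w i * x i‖ ≤ ∑ i ∈ s, ‖x i - t‖ := by
  have hshift : ∑ i ∈ s, w i * x i = ∑ i ∈ s, w i * (x i - t) := by
    simp only [mul_sub, sum_sub_distrib, ← sum_mul, hw, zero_mul, sub_zero]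
  calc ‖∑ i ∈ s, w i * x i‖
      ≤ ∑ i ∈ s, ‖w i‖ * ‖x i - t‖ := hshift ▸ norm_sum_le_of_le s fun i _ ↦ (norm_mul _ _).le
    _ ≤ ∑ i ∈ s, ‖x i - t‖ := sum_le_sum fun i hi ↦
        mul_le_of_le_one_left (norm_nonneg _) (hw₁ i hi)

theorem Real.abs_sqrt_sub_sqrt_mul_sqrt_le {x y : ℝ} (hx : 0 ≤ x) (hy : 0 ≤ y) :
    |√x - √y| * √y ≤ |x - y| :=
  calc |√x - √y| * √y
      ≤ |√x - √y| * (√x + √y) := by gcongr; exact le_add_of_nonneg_left (Real.sqrt_nonneg x)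
    _ = |x - y| := by
        rw [← abs_of_nonneg (by positivity : 0 ≤ √x + √y), ← abs_mul]
        congr 1
        linear_combination sq_sqrt hx - sq_sqrt hy

theorem Real.abs_sqrt_sub_sqrt_one_div_le {x d δ : ℝ} (hx : 0 ≤ x) (hd : 0 < d)
    (hxδ : |x - 1 / d| ≤ δ) :
    |√x - √(1 / d)| ≤ δ * √d := by
  have hinv : √(1 / d) * √d = 1 := by
    rw [← Real.sqrt_mul (by positivity), one_div_mul_cancel hd.ne', Real.sqrt_one]
  calc |√x - √(1 / d)| = |√x - √(1 / d)| * √(1 / d) * √d := by rw [mul_assoc, hinv, mul_one]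
    _ ≤ δ * √d := by
        gcongr
        exact (abs_sqrt_sub_sqrt_mul_sqrt_le hx (by positivity)).trans hxδ

theorem stmt_11_general (d : ℕ) [NeZero d]
    (c : ZMod d → ℝ) (hc : ∀ j, 0 ≤ c j)
    (δ : ℝ) (hcδ : ∀ j : ZMod d, |c j - 1 / d| ≤ δ) :
    ∀ a : ZMod d, a ≠ 0 →
      (1 / d) * ‖∑ j : ZMod d,
          Complex.exp (2 * Real.pi * Complex.I / d) ^ ((a * j).val) * (Real.sqrt (c j) : ℂ)‖ ^ 2
        ≤ (d : ℝ) ^ 2 * δ ^ 2 := by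
  intro a ha
  have hd : (0 : ℝ) < d := Nat.cast_pos.mpr (NeZero.pos d)
  have hζ := Complex.isPrimitiveRoot_exp d (NeZero.ne d)
  have hnorm : ‖∑ j : ZMod d,
      Complex.exp (2 * Real.pi * Complex.I / d) ^ ((a * j).val) * (Real.sqrt (c j) : ℂ)‖
      ≤ d * (δ * √d) :=
    calc _ ≤ ∑ j : ZMod d, ‖(√(c j) : ℂ) - (√(1 / d) : ℝ)‖ :=
          norm_sum_mul_le_sum_norm_sub_of_sum_eq_zero (hζ.sum_pow_val_mul_eq_zero ha)
            (fun j _ ↦ by rw [norm_pow, hζ.norm'_eq_one (NeZero.ne d), one_pow]) _ _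
      _ ≤ ∑ _j : ZMod d, δ * √d := sum_le_sum fun j _ ↦ by
          rw [← Complex.ofReal_sub, Complex.norm_real, Real.norm_eq_abs]
          exact Real.abs_sqrt_sub_sqrt_one_div_le (hc j) hd (hcδ j)
      _ = d * (δ * √d) := by simp
  calc (1 / d) * ‖_‖ ^ 2 ≤ (1 / d) * (d * (δ * √d)) ^ 2 := by gcongr
    _ = (d : ℝ) ^ 2 * δ ^ 2 := by
        rw [mul_pow, mul_pow, Real.sq_sqrt hd.le]
        field_simp

theorem stmt_11 (d : ℕ) [NeZero d] (hd : 2 ≤ d)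
    (c : ZMod d → ℝ) (hc : ∀ j, 0 ≤ c j) (hcsum : ∑ j, c j = 1)
    (δ : ℝ) (hδ : 0 ≤ δ) (hcδ : ∀ j : ZMod d, |c j - 1 / d| ≤ δ) :
    ∀ a : ZMod d, a ≠ 0 →
      (1 / d) * ‖∑ j : ZMod d,
          Complex.exp (2 * Real.pi * Complex.I / d) ^ ((a * j).val) * (Real.sqrt (c j) : ℂ)‖ ^ 2
        ≤ (d : ℝ) ^ 2 * δ ^ 2 :=
  stmt_11_general d c hc δ hcδ
end

section
/- Fix an integer d ≥ 2 and let ω = exp(2πi/d). Let c : ZMod d → ℝ satisfy c_j ≥ 0 for all j, ∑_j c_j = 1, and |c_j − 1/d| ≤ δ for all j, for some δ ≥ 0. Then: (1/d) · | ∑_{j ∈ ZMod d} √(c_j) |² ≥ 1 − (d−1) · d² · δ². -/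
/-!
The vector `(√c_j)_j` and the uniform vector `(√(1/d))_j` are unit vectors in `ℝ^d`, and for unit
vectors `x, y` one has `⟪x, y⟫ = 1 - ‖x - y‖² / 2`, hence `⟪x, y⟫² ≥ 1 - ‖x - y‖²`. Here
`⟪x, y⟫² = (1/d) (∑_j √c_j)²`, while `|√c_j - √(1/d)| ≤ |c_j - 1/d| / √(1/d) ≤ √d δ` bounds
`‖x - y‖²` by `d² δ²`.
-/

open Finset

theorem one_sub_norm_sub_sq_le_inner_sq {F : Type*} [NormedAddCommGroup F] [InnerProductSpace ℝ F]
    {x y : F} (hx : ‖x‖ = 1) (hy : ‖y‖ = 1) : 1 - ‖x - y‖ ^ 2 ≤ inner ℝ x y ^ 2 := by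
  rw [norm_sub_sq_real, hx, hy]
  nlinarith [sq_nonneg (inner ℝ x y - 1)]

theorem abs_sqrt_sub_sqrt_le {a b : ℝ} (ha : 0 ≤ a) (hb : 0 < b) :
    |√a - √b| ≤ |a - b| / √b := by
  rw [le_div_iff₀ (Real.sqrt_pos.2 hb)]
  calc |√a - √b| * √b ≤ |√a - √b| * (√a + √b) := by gcongr; linarith [Real.sqrt_nonneg a]
    _ = |a - b| := by
      rw [← abs_of_nonneg (by positivity : 0 ≤ √a + √b), ← abs_mul]
      ring_nf
      rw [Real.sq_sqrt ha, Real.sq_sqrt hb.le]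

theorem sq_sqrt_sub_sqrt_le {a b δ : ℝ} (ha : 0 ≤ a) (hb : 0 < b) (h : |a - b| ≤ δ) :
    (√a - √b) ^ 2 ≤ δ ^ 2 / b := by
  have hδ : 0 ≤ δ := (abs_nonneg _).trans h
  calc (√a - √b) ^ 2 = |√a - √b| ^ 2 := (sq_abs _).symm
    _ ≤ (δ / √b) ^ 2 := by
      gcongr
      exact (abs_sqrt_sub_sqrt_le ha hb).trans (by gcongr)
    _ = δ ^ 2 / b := by rw [div_pow, Real.sq_sqrt hb.le]

theorem one_sub_sum_sq_sqrt_sub_le {ι : Type*} [Fintype ι] [Nonempty ι] {c : ι → ℝ}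
    (hc : ∀ j, 0 ≤ c j) (hsum : ∑ j, c j = 1) :
    1 - ∑ j, (√(c j) - √(1 / Fintype.card ι)) ^ 2 ≤ (∑ j, √(c j)) ^ 2 / Fintype.card ι := by
  set n : ℝ := (Fintype.card ι : ℝ)
  have hn : 0 < n := by positivity
  have hnorm (v : ι → ℝ) : ‖WithLp.toLp 2 v‖ = √(∑ j, v j ^ 2) := by
    simp [EuclideanSpace.norm_eq]
  have hx : ‖WithLp.toLp 2 (fun j => √(c j))‖ = 1 := by
    simp [hnorm, Real.sq_sqrt, hc, hsum]
  have he : ‖WithLp.toLp 2 (fun _ : ι => √(1 / n))‖ = 1 := by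
    simp [hnorm, n, hn.ne']
  have key := one_sub_norm_sub_sq_le_inner_sq hx he
  rw [← WithLp.toLp_sub, hnorm, Real.sq_sqrt (by positivity), PiLp.inner_apply] at key
  convert key using 2
  · rfl
  · simp only [Real.inner_apply, ← sum_mul, mul_pow]
    rw [Real.sq_sqrt (by positivity), mul_one_div]

theorem stmt_13_general (d : ℕ) [NeZero d] (hd : 2 ≤ d)
    (c : ZMod d → ℝ) (hc : ∀ j, 0 ≤ c j) (hcsum : ∑ j, c j = 1)
    (δ : ℝ) (hcδ : ∀ j : ZMod d, |c j - 1 / d| ≤ δ) :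
    (1 / d) * |∑ j : ZMod d, Real.sqrt (c j)| ^ 2
      ≥ 1 - ((d : ℝ) - 1) * (d : ℝ) ^ 2 * δ ^ 2 := by
  have hcard : (Fintype.card (ZMod d) : ℝ) = d := by rw [ZMod.card]
  have hdist : ∑ j, (√(c j) - √(1 / d)) ^ 2 ≤ d ^ 2 * δ ^ 2 :=
    calc ∑ j, (√(c j) - √(1 / d)) ^ 2 ≤ ∑ _j : ZMod d, δ ^ 2 / (1 / d) :=
          sum_le_sum fun j _ => sq_sqrt_sub_sqrt_le (hc j) (by positivity) (hcδ j)
      _ = d ^ 2 * δ ^ 2 := by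
          rw [sum_const, card_univ, nsmul_eq_mul, hcard]
          field_simp
  have hd1 : (1 : ℝ) ≤ d - 1 := by
    have : (2 : ℝ) ≤ d := by exact_mod_cast hd
    linarith
  have hfidelity := one_sub_sum_sq_sqrt_sub_le hc hcsum
  rw [hcard] at hfidelity
  rw [sq_abs, ge_iff_le, one_div_mul_eq_div]
  calc 1 - ((d : ℝ) - 1) * d ^ 2 * δ ^ 2 ≤ 1 - d ^ 2 * δ ^ 2 := by
        nlinarith [mul_nonneg (sq_nonneg (d : ℝ)) (sq_nonneg δ)]
    _ ≤ 1 - ∑ j, (√(c j) - √(1 / d)) ^ 2 := by linarith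
    _ ≤ (∑ j, √(c j)) ^ 2 / d := hfidelity

theorem stmt_13 (d : ℕ) [NeZero d] (hd : 2 ≤ d)
    (c : ZMod d → ℝ) (hc : ∀ j, 0 ≤ c j) (hcsum : ∑ j, c j = 1)
    (δ : ℝ) (hδ : 0 ≤ δ) (hcδ : ∀ j : ZMod d, |c j - 1 / d| ≤ δ) :
    (1 / d) * |∑ j : ZMod d, Real.sqrt (c j)| ^ 2
      ≥ 1 - ((d : ℝ) - 1) * (d : ℝ) ^ 2 * δ ^ 2 :=
  stmt_13_general d hd c hc hcsum δ hcδ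
end
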